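/- arXiv:1703.07344 — 4 statements merged into one kernel-verified Lean document; each statement's English description precedes it below -/
import Mathlib

section
/- Let (d;a) be a regular pair with d ∈ ℕ₊^c, a ∈ ℕ₊^{n+1}, and let p be a prime. Then the pair (d(p)/p ; a(p)/p), obtained by taking the entries of d and a divisible by p and dividing them by p, is again regular. -/
open Finset

/-- (d;a) is regular: for every m > 1, at least as many d's as a's are divisible by m. -/
def Regular {c n : ℕ} (d : Fin c → ℕ) (a : Fin n → ℕ) : Prop :=
  ∀ m : ℕ, 1 < m →
    (univ.filter fun i => m ∣ a i).card ≤ (univ.filter fun j => m ∣ d j).card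

theorem Nat.dvd_and_dvd_div_iff_mul_dvd {p m x : ℕ} : p ∣ x ∧ m ∣ x / p ↔ p * m ∣ x :=
  ⟨fun ⟨hpx, hmx⟩ => (Nat.dvd_div_iff_mul_dvd hpx).mp hmx,
    fun h => ⟨dvd_of_mul_right_dvd h, (Nat.dvd_div_iff_mul_dvd (dvd_of_mul_right_dvd h)).mpr h⟩⟩

/-- The condition for `m` on `(d(p)/p; a(p)/p)` is the regularity condition for `p * m` on `(d; a)`. -/
theorem Regular.card_filter_dvd_div_le {c n p m : ℕ} {d : Fin c → ℕ} {a : Fin n → ℕ}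
    (hreg : Regular d a) (hp : 0 < p) (hm : 1 < m) :
    (univ.filter fun i => p ∣ a i ∧ m ∣ a i / p).card ≤
      (univ.filter fun j => p ∣ d j ∧ m ∣ d j / p).card := by
  simp_rw [Nat.dvd_and_dvd_div_iff_mul_dvd]
  exact hreg (p * m) (one_lt_mul_of_le_of_lt hp hm)

theorem stmt1_general {c n : ℕ} (p : ℕ) (hp : p.Prime)
    (d : Fin c → ℕ) (a : Fin (n + 1) → ℕ)
    (hreg : Regular d a) :
    ∀ m : ℕ, 1 < m →
      (univ.filter fun i => p ∣ a i ∧ m ∣ a i / p).card ≤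
      (univ.filter fun j => p ∣ d j ∧ m ∣ d j / p).card :=
  fun _ hm => hreg.card_filter_dvd_div_le hp.pos hm

theorem stmt1 {c n : ℕ} (p : ℕ) (hp : p.Prime)
    (d : Fin c → ℕ) (a : Fin (n + 1) → ℕ)
    (hd : ∀ j, 0 < d j) (ha : ∀ i, 0 < a i)
    (hreg : Regular d a) :
    ∀ m : ℕ, 1 < m →
      (univ.filter fun i => p ∣ a i ∧ m ∣ a i / p).card ≤
      (univ.filter fun j => p ∣ d j ∧ m ∣ d j / p).card :=
  stmt1_general p hp d a hreg
end

section
/- Let h be a positive integer, p a prime dividing h, and let (d;a) be an h-regular pair. Then the pair (d^p; a^p), obtained by dividing by p every entry of d and a divisible by p, is (h/p)-regular, and the pair (d(p)/p ; a(p)/p) of quotients by p of the entries divisible by p is also (h/p)-regular. -/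
open Finset

def HRegular (h : ℕ) {c n : ℕ} (d : Fin c → ℕ) (a : Fin n → ℕ) : Prop :=
  ∀ m : ℕ, 1 < m →
    (univ.filter fun i => m ∣ a i).card ≤
      (univ.filter fun j => m ∣ d j).card + (if m ∣ h then 1 else 0)

/-!
Dividing by `p` the entries divisible by `p` turns divisibility by `m` into divisibility by
`p * m` of the original entry when `p ∣ m`, and leaves it unchanged when `m` is coprime to `p`;
the same holds for `h / p` against `h`. So every inequality asked of the new pairs at `m` is an
inequality of the `h`-regular pair `(d; a)` at `p * m` or at `m`.
-/

namespace Nat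

theorem dvd_and_dvd_div_iff_mul_dvd_s13 {p m x : ℕ} : p ∣ x ∧ m ∣ x / p ↔ p * m ∣ x :=
  ⟨fun ⟨hpx, hm⟩ => (dvd_div_iff_mul_dvd hpx).1 hm,
    fun h => ⟨(dvd_mul_right p m).trans h, dvd_div_of_mul_dvd h⟩⟩

theorem Coprime.dvd_div_iff_dvd {p m x : ℕ} (hmp : m.Coprime p) (hpx : p ∣ x) :
    m ∣ x / p ↔ m ∣ x :=
  ⟨fun h => h.trans (div_dvd_of_dvd hpx),
    fun h => (dvd_div_iff_mul_dvd hpx).2 (hmp.symm.mul_dvd_of_dvd_of_dvd hpx h)⟩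

theorem dvd_ite_div_iff_mul_dvd {p m x : ℕ} (hpm : p ∣ m) :
    m ∣ (if p ∣ x then x / p else x) ↔ p * m ∣ x := by
  split_ifs with hpx
  · exact dvd_div_iff_mul_dvd hpx
  · exact iff_of_false (fun h => hpx (hpm.trans h)) (fun h => hpx ((dvd_mul_right p m).trans h))

theorem Coprime.dvd_ite_div_iff_dvd {p m x : ℕ} (hmp : m.Coprime p) :
    m ∣ (if p ∣ x then x / p else x) ↔ m ∣ x := by
  split_ifs with hpx
  · exact hmp.dvd_div_iff_dvd hpx
  · rfl

end Nat

theorem HRegular.card_filter_le_of_iff {h c n : ℕ} {d : Fin c → ℕ} {a : Fin n → ℕ}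
    (hreg : HRegular h d a) {m : ℕ} (hm : 1 < m) (P : ℕ → Prop) [DecidablePred P]
    (hP : ∀ x, P x ↔ m ∣ x) (Q : Prop) [Decidable Q] (hQ : Q ↔ m ∣ h) :
    (univ.filter fun i => P (a i)).card ≤
      (univ.filter fun j => P (d j)).card + (if Q then 1 else 0) := by
  simpa only [hP, hQ] using hreg m hm

theorem stmt13_general {c n : ℕ} (h p : ℕ) (hp : p.Prime) (hph : p ∣ h)
    (d : Fin c → ℕ) (a : Fin (n + 1) → ℕ)
    (hreg : HRegular h d a) :
    HRegular (h / p) (fun j => if p ∣ d j then d j / p else d j)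
      (fun i => if p ∣ a i then a i / p else a i) ∧
    (∀ m : ℕ, 1 < m →
      (univ.filter fun i => p ∣ a i ∧ m ∣ a i / p).card ≤
        (univ.filter fun j => p ∣ d j ∧ m ∣ d j / p).card +
          (if m ∣ h / p then 1 else 0)) := by
  have hpm_gt {m : ℕ} (hm : 1 < m) : 1 < p * m := hm.trans_le (Nat.le_mul_of_pos_left m hp.pos)
  refine ⟨fun m hm => ?_, fun m hm => ?_⟩
  · by_cases hpm : p ∣ m
    · exact hreg.card_filter_le_of_iff (hpm_gt hm) _ (fun _ => Nat.dvd_ite_div_iff_mul_dvd hpm) _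
        (Nat.dvd_div_iff_mul_dvd hph)
    · have hmp : m.Coprime p := (hp.coprime_iff_not_dvd.2 hpm).symm
      exact hreg.card_filter_le_of_iff hm _ (fun _ => hmp.dvd_ite_div_iff_dvd) _
        (hmp.dvd_div_iff_dvd hph)
  · exact hreg.card_filter_le_of_iff (hpm_gt hm) _ (fun _ => Nat.dvd_and_dvd_div_iff_mul_dvd_s13) _
      (Nat.dvd_div_iff_mul_dvd hph)

theorem stmt13 {c n : ℕ} (h p : ℕ) (hh : 0 < h) (hp : p.Prime) (hph : p ∣ h)
    (d : Fin c → ℕ) (a : Fin (n + 1) → ℕ)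
    (hd : ∀ j, 0 < d j) (ha : ∀ i, 0 < a i)
    (hreg : HRegular h d a) :
    HRegular (h / p) (fun j => if p ∣ d j then d j / p else d j)
      (fun i => if p ∣ a i then a i / p else a i) ∧
    (∀ m : ℕ, 1 < m →
      (univ.filter fun i => p ∣ a i ∧ m ∣ a i / p).card ≤
        (univ.filter fun j => p ∣ d j ∧ m ∣ d j / p).card +
          (if m ∣ h / p then 1 else 0)) :=
  stmt13_general h p hp hph d a hreg
end

section
/- Let q be an odd prime and (d;a) a regular pair with d ∈ ℕ₊^c, a ∈ ℕ₊^{n+1}, a_i ≠ d_j for all i,j, such that every a_i is of the form 2^{α_i}·q^{β_i} with β_i ≥ 1, and every d_j is divisible by q, and moreover the maximal power of q dividing any a_i is q itself (t = 1). Then Σ_j d_j − Σ_i a_i ≥ c·q. -/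
open Finset

def delta {c n : ℕ} (d : Fin c → ℕ) (a : Fin n → ℕ) : ℤ :=
  ∑ j, (d j : ℤ) - ∑ i, (a i : ℤ)

theorem stmt17 {c n : ℕ} (q : ℕ) (hq : q.Prime) (hodd : Odd q)
    (d : Fin c → ℕ) (a : Fin (n + 1) → ℕ)
    (hd : ∀ j, 0 < d j) (ha : ∀ i, 0 < a i)
    (hne : ∀ i j, a i ≠ d j)
    (haq : ∀ i, ∃ α : ℕ, a i = 2 ^ α * q)
    (hdq : ∀ j, q ∣ d j)
    (hreg : Regular d a) :
    (c : ℤ) * q ≤ delta d a := by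
  classical
  have hq1 : 1 < q := hq.one_lt
  have hdvd : ∀ i i' : Fin (n+1), a i ≤ a i' → a i ∣ a i' := by
    intro i i' h
    obtain ⟨α, hα⟩ := haq i; obtain ⟨β, hβ⟩ := haq i'
    rw [hα, hβ] at h ⊢
    have h2 : (2:ℕ)^α ≤ 2^β := Nat.le_of_mul_le_mul_right h (by omega)
    have hab : α ≤ β := (pow_le_pow_iff_right₀ one_lt_two).mp h2
    exact mul_dvd_mul (pow_dvd_pow 2 hab) dvd_rfl
  have haq' : ∀ i, q ≤ a i := by
    intro i; obtain ⟨α, hα⟩ := haq i; rw [hα]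
    have : 1 ≤ 2^α := Nat.one_le_two_pow
    nlinarith
  set t : Fin (n+1) → Finset (Fin c) := fun i => univ.filter fun j => a i ∣ d j with ht
  have hall : ∀ s : Finset (Fin (n+1)), s.card ≤ (s.biUnion t).card := by
    intro s
    rcases s.eq_empty_or_nonempty with rfl | hs
    · simp
    obtain ⟨i₀, hi₀, hmin⟩ := s.exists_min_image a hs
    have h1 : 1 < a i₀ := lt_of_lt_of_le hq1 (haq' i₀)
    have hsub : s ⊆ univ.filter fun i => a i₀ ∣ a i := by
      intro i hi
      simp only [mem_filter, mem_univ, true_and]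
      exact hdvd _ _ (hmin i hi)
    calc s.card ≤ (univ.filter fun i => a i₀ ∣ a i).card := card_le_card hsub
      _ ≤ (univ.filter fun j => a i₀ ∣ d j).card := hreg _ h1
      _ ≤ (s.biUnion t).card := by
          apply card_le_card
          intro j hj
          simp only [mem_filter, mem_univ, true_and] at hj
          exact mem_biUnion.mpr ⟨i₀, hi₀, by simp [ht, hj]⟩
  obtain ⟨f, hfinj, hft⟩ := (Finset.all_card_le_biUnion_card_iff_exists_injective t).mp hall
  have hfd : ∀ i, a i ∣ d (f i) := by
    intro i; have := hft i; simpa [ht] using this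
  have hkey : ∀ i, (a i : ℤ) + q ≤ d (f i) := by
    intro i
    obtain ⟨k, hk⟩ := hfd i
    have hne' := hne i (f i)
    have hk1 : k ≠ 1 := by rintro rfl; rw [mul_one] at hk; exact hne' hk.symm
    have hk0 : k ≠ 0 := by
      rintro rfl; rw [mul_zero] at hk; exact (hd (f i)).ne' hk
    have h2 : 2 ≤ k := by omega
    have : 2 * a i ≤ d (f i) := by
      calc 2 * a i = a i * 2 := by ring
        _ ≤ a i * k := Nat.mul_le_mul_left _ h2
        _ = d (f i) := hk.symm
    have hqa := haq' i
    push_cast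
    omega
  have hdq' : ∀ j, q ≤ d j := fun j => Nat.le_of_dvd (hd j) (hdq j)
  have hcard : (Finset.image f univ).card = n + 1 := by
    rw [Finset.card_image_of_injective _ hfinj, card_univ, Fintype.card_fin]
  have hnc : n + 1 ≤ c := by
    have := Fintype.card_le_of_injective f hfinj
    simpa using this
  have hsplit : ∑ j, (d j : ℤ)
      = ∑ j ∈ univ \ Finset.image f univ, (d j : ℤ) + ∑ i, (d (f i) : ℤ) := by
    have him : ∑ j ∈ Finset.image f univ, (d j : ℤ) = ∑ i, (d (f i) : ℤ) :=
      Finset.sum_image (fun i _ i' _ h => hfinj h)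
    rw [← him]
    exact (Finset.sum_sdiff (subset_univ _)).symm
  have hub : ((c : ℤ) - (n + 1)) * q ≤ ∑ j ∈ univ \ Finset.image f univ, (d j : ℤ) := by
    have hc : (univ \ Finset.image f univ).card = c - (n + 1) := by
      rw [card_sdiff_of_subset (subset_univ _), card_univ, Fintype.card_fin, hcard]
    calc ((c : ℤ) - (n + 1)) * q = ((c - (n+1) : ℕ) : ℤ) * q := by
          rw [Nat.cast_sub hnc]; push_cast; ring
      _ = ∑ _j ∈ univ \ Finset.image f univ, (q : ℤ) := by
          rw [Finset.sum_const, hc]; push_cast; ring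
      _ ≤ _ := Finset.sum_le_sum fun j _ => by exact_mod_cast hdq' j
  have hmatch : ((n : ℤ) + 1) * q ≤ ∑ i, ((d (f i) : ℤ) - a i) := by
    calc ((n : ℤ) + 1) * q = ∑ _i : Fin (n+1), (q : ℤ) := by
          rw [Finset.sum_const, card_univ, Fintype.card_fin]; push_cast; ring
      _ ≤ _ := Finset.sum_le_sum fun i _ => by have := hkey i; omega
  unfold delta
  rw [hsplit]
  rw [Finset.sum_sub_distrib] at hmatch
  linarith
end

section
/- Let (d;a) be a regular pair with d ∈ ℕ₊^c, a ∈ ℕ₊^{n+1}, with all a_i > 1 and a_i ≠ d_j for all i,j, and let q be a prime dividing some a_i. Then δ(d(q); a(q)) > 0, where d(q), a(q) are the subtuples of entries divisible by q. In particular δ(d;a) > δ(d^q; a^q). -/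
open Finset

lemma totient_sum_eq {B x : ℕ} (hx : 0 < x) (hxB : x ≤ B) :
    x = ∑ m ∈ Finset.Ico 1 (B + 1), if m ∣ x then Nat.totient m else 0 := by
  rw [← Finset.sum_filter]
  have h : (Finset.Ico 1 (B+1)).filter (· ∣ x) = x.divisors := by
    ext m
    simp only [Finset.mem_filter, Finset.mem_Ico, Nat.mem_divisors]
    constructor
    · rintro ⟨_, h⟩; exact ⟨h, hx.ne'⟩
    · rintro ⟨h, -⟩
      have h1 := Nat.pos_of_dvd_of_pos h hx
      have h2 := Nat.le_of_dvd hx h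
      exact ⟨⟨h1, by omega⟩, h⟩
  rw [h, Nat.sum_totient]

lemma sum_eq (B : ℕ) {k : ℕ} (q : ℕ) (f : Fin k → ℕ) (hf : ∀ t, 0 < f t)
    (hB : ∀ t, f t ≤ B) :
    ∑ t ∈ univ.filter (fun t => q ∣ f t), f t
      = ∑ m ∈ Finset.Ico 1 (B+1),
          Nat.totient m * (univ.filter (fun t => q ∣ f t ∧ m ∣ f t)).card := by
  calc ∑ t ∈ univ.filter (fun t => q ∣ f t), f t
      = ∑ t ∈ univ.filter (fun t => q ∣ f t),
          ∑ m ∈ Finset.Ico 1 (B+1), if m ∣ f t then Nat.totient m else 0 :=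
        Finset.sum_congr rfl fun t _ => totient_sum_eq (hf t) (hB t)
    _ = ∑ m ∈ Finset.Ico 1 (B+1), ∑ t ∈ univ.filter (fun t => q ∣ f t),
          (if m ∣ f t then Nat.totient m else 0) := Finset.sum_comm
    _ = ∑ m ∈ Finset.Ico 1 (B+1),
          Nat.totient m * (univ.filter (fun t => q ∣ f t ∧ m ∣ f t)).card := by
        refine Finset.sum_congr rfl fun m _ => ?_
        rw [← Finset.sum_filter, Finset.sum_const, smul_eq_mul, mul_comm,
          Finset.filter_filter]

lemma core {c n : ℕ} (q : ℕ) (hq : q.Prime)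
    (d : Fin c → ℕ) (a : Fin (n + 1) → ℕ)
    (hd : ∀ j, 0 < d j) (ha : ∀ i, 1 < a i)
    (hne : ∀ i j, a i ≠ d j)
    (hreg : Regular d a)
    (hqa : ∃ i, q ∣ a i) :
    ∑ i ∈ univ.filter (fun i => q ∣ a i), a i <
      ∑ j ∈ univ.filter (fun j => q ∣ d j), d j := by
  set B := (∑ j, d j) + (∑ i, a i) with hB
  have hdB : ∀ j, d j ≤ B := fun j =>
    le_trans (Finset.single_le_sum (fun _ _ => Nat.zero_le _) (mem_univ j))
      (Nat.le_add_right _ _)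
  have haB : ∀ i, a i ≤ B := fun i =>
    le_trans (Finset.single_le_sum (fun _ _ => Nat.zero_le _) (mem_univ i))
      (Nat.le_add_left _ _)
  -- pick maximal a i divisible by q
  obtain ⟨i1, hi1⟩ := hqa
  have hsne : (univ.filter fun i => q ∣ a i).Nonempty :=
    ⟨i1, by simp [hi1]⟩
  obtain ⟨i0, hi0mem, hi0max⟩ := Finset.exists_max_image _ a hsne
  have hqa0 : q ∣ a i0 := by simpa using hi0mem
  -- find d j0 divisible by a i0
  have hcard : (univ.filter fun i => a i0 ∣ a i).card ≤
      (univ.filter fun j => a i0 ∣ d j).card := hreg _ (ha i0)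
  have hne0 : (univ.filter fun j => a i0 ∣ d j).Nonempty := by
    rw [← Finset.card_pos]
    refine lt_of_lt_of_le ?_ hcard
    rw [Finset.card_pos]
    exact ⟨i0, by simp⟩
  obtain ⟨j0, hj0⟩ := hne0
  have hMdj0 : a i0 ∣ d j0 := by simpa using hj0
  have hqd0 : q ∣ d j0 := hqa0.trans hMdj0
  have hlt0 : a i0 < d j0 :=
    lt_of_le_of_ne (Nat.le_of_dvd (hd j0) hMdj0) (hne i0 j0)
  rw [sum_eq B q a (fun i => lt_trans Nat.zero_lt_one (ha i)) haB,
    sum_eq B q d hd hdB]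
  refine Finset.sum_lt_sum ?_ ⟨d j0, ?_, ?_⟩
  · rintro m hm
    have hm1 : 1 ≤ m := (Finset.mem_Ico.mp hm).1
    refine Nat.mul_le_mul_left _ ?_
    have hL : 0 < Nat.lcm q m := Nat.lcm_pos hq.pos hm1
    have hL1 : 1 < Nat.lcm q m :=
      lt_of_lt_of_le hq.one_lt (Nat.le_of_dvd hL (Nat.dvd_lcm_left q m))
    have e1 : (univ.filter fun i => q ∣ a i ∧ m ∣ a i)
        = (univ.filter fun i => Nat.lcm q m ∣ a i) := by
      ext i
      simp only [Finset.mem_filter, Finset.mem_univ, true_and]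
      constructor
      · rintro ⟨h1, h2⟩; exact Nat.lcm_dvd h1 h2
      · intro h; exact ⟨(Nat.dvd_lcm_left q m).trans h, (Nat.dvd_lcm_right q m).trans h⟩
    have e2 : (univ.filter fun j => q ∣ d j ∧ m ∣ d j)
        = (univ.filter fun j => Nat.lcm q m ∣ d j) := by
      ext j
      simp only [Finset.mem_filter, Finset.mem_univ, true_and]
      constructor
      · rintro ⟨h1, h2⟩; exact Nat.lcm_dvd h1 h2
      · intro h; exact ⟨(Nat.dvd_lcm_left q m).trans h, (Nat.dvd_lcm_right q m).trans h⟩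
    rw [e1, e2]
    exact hreg _ hL1
  · exact Finset.mem_Ico.mpr ⟨hd j0, by have := hdB j0; omega⟩
  · have hempty : (univ.filter fun i => q ∣ a i ∧ d j0 ∣ a i) = ∅ := by
      rw [Finset.filter_eq_empty_iff]
      rintro i - ⟨h1, h2⟩
      have : a i ≤ a i0 := hi0max i (by simp [h1])
      have : d j0 ≤ a i := Nat.le_of_dvd (lt_trans Nat.zero_lt_one (ha i)) h2
      omega
    rw [hempty]
    simp only [Finset.card_empty, Nat.mul_zero]
    have h1 : 0 < Nat.totient (d j0) := Nat.totient_pos.mpr (hd j0)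
    have h2 : 0 < (univ.filter fun j => q ∣ d j ∧ d j0 ∣ d j).card := by
      rw [Finset.card_pos]; exact ⟨j0, by simp [hqd0]⟩
    positivity

theorem stmt18 {c n : ℕ} (q : ℕ) (hq : q.Prime)
    (d : Fin c → ℕ) (a : Fin (n + 1) → ℕ)
    (hd : ∀ j, 0 < d j) (ha : ∀ i, 1 < a i)
    (hne : ∀ i j, a i ≠ d j)
    (hreg : Regular d a)
    (hqa : ∃ i, q ∣ a i) :
    0 < (∑ j ∈ univ.filter (fun j => q ∣ d j), (d j : ℤ) -
          ∑ i ∈ univ.filter (fun i => q ∣ a i), (a i : ℤ)) ∧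
      (∑ j, ((if q ∣ d j then d j / q else d j : ℕ) : ℤ) -
          ∑ i, ((if q ∣ a i then a i / q else a i : ℕ) : ℤ)) <
        (∑ j, (d j : ℤ) - ∑ i, (a i : ℤ)) := by
  have hcore := core q hq d a hd ha hne hreg hqa
  constructor
  · rw [← Nat.cast_sum, ← Nat.cast_sum, sub_pos]
    exact_mod_cast hcore
  · -- nat-level bookkeeping
    set d' : Fin c → ℕ := fun j => if q ∣ d j then d j / q else d j with hd'
    set a' : Fin (n+1) → ℕ := fun i => if q ∣ a i then a i / q else a i with ha'
    have hd'le : ∀ j, d' j ≤ d j := fun j => by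
      simp only [hd']; split <;> [exact Nat.div_le_self _ _; exact le_rfl]
    have ha'le : ∀ i, a' i ≤ a i := fun i => by
      simp only [ha']; split <;> [exact Nat.div_le_self _ _; exact le_rfl]
    -- T sums
    have hTd : ∑ j, (d j - d' j)
        = (q - 1) * ∑ j ∈ univ.filter (fun j => q ∣ d j), d j / q := by
      rw [Finset.mul_sum, ← Finset.sum_filter_add_sum_filter_not univ (fun j => q ∣ d j)]
      have h2 : ∑ j ∈ univ.filter (fun j => ¬ q ∣ d j), (d j - d' j) = 0 := by
        refine Finset.sum_eq_zero fun j hj => ?_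
        have : ¬ q ∣ d j := (Finset.mem_filter.mp hj).2
        simp [hd', this]
      rw [h2, Nat.add_zero]
      refine Finset.sum_congr rfl fun j hj => ?_
      have hqdj : q ∣ d j := (Finset.mem_filter.mp hj).2
      have heq : d j = q * (d j / q) := (Nat.mul_div_cancel' hqdj).symm
      simp only [hd', if_pos hqdj]
      rw [Nat.sub_mul, one_mul]
      omega
    have hTa : ∑ i, (a i - a' i)
        = (q - 1) * ∑ i ∈ univ.filter (fun i => q ∣ a i), a i / q := by
      rw [Finset.mul_sum, ← Finset.sum_filter_add_sum_filter_not univ (fun i => q ∣ a i)]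
      have h2 : ∑ i ∈ univ.filter (fun i => ¬ q ∣ a i), (a i - a' i) = 0 := by
        refine Finset.sum_eq_zero fun i hi => ?_
        have : ¬ q ∣ a i := (Finset.mem_filter.mp hi).2
        simp [ha', this]
      rw [h2, Nat.add_zero]
      refine Finset.sum_congr rfl fun i hi => ?_
      have hqai : q ∣ a i := (Finset.mem_filter.mp hi).2
      have heq : a i = q * (a i / q) := (Nat.mul_div_cancel' hqai).symm
      simp only [ha', if_pos hqai]
      rw [Nat.sub_mul, one_mul]
      omega
    -- q * U = S
    have hSd : ∑ j ∈ univ.filter (fun j => q ∣ d j), d j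
        = q * ∑ j ∈ univ.filter (fun j => q ∣ d j), d j / q := by
      rw [Finset.mul_sum]
      exact Finset.sum_congr rfl fun j hj =>
        (Nat.mul_div_cancel' (Finset.mem_filter.mp hj).2).symm
    have hSa : ∑ i ∈ univ.filter (fun i => q ∣ a i), a i
        = q * ∑ i ∈ univ.filter (fun i => q ∣ a i), a i / q := by
      rw [Finset.mul_sum]
      exact Finset.sum_congr rfl fun i hi =>
        (Nat.mul_div_cancel' (Finset.mem_filter.mp hi).2).symm
    have hU : ∑ i ∈ univ.filter (fun i => q ∣ a i), a i / q
        < ∑ j ∈ univ.filter (fun j => q ∣ d j), d j / q := by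
      rw [hSd, hSa] at hcore
      exact lt_of_mul_lt_mul_left hcore (Nat.zero_le q)
    have hT : ∑ i, (a i - a' i) < ∑ j, (d j - d' j) := by
      rw [hTa, hTd]
      have hq1 : 0 < q - 1 := by have := hq.two_le; omega
      exact Nat.mul_lt_mul_of_le_of_lt le_rfl hU hq1
    -- reconstruct full sums
    have hrd : ∑ j, d' j + ∑ j, (d j - d' j) = ∑ j, d j := by
      rw [← Finset.sum_add_distrib]
      exact Finset.sum_congr rfl fun j _ => by have := hd'le j; omega
    have hra : ∑ i, a' i + ∑ i, (a i - a' i) = ∑ i, a i := by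
      rw [← Finset.sum_add_distrib]
      exact Finset.sum_congr rfl fun i _ => by have := ha'le i; omega
    have cast1 : ∑ j, ((if q ∣ d j then d j / q else d j : ℕ) : ℤ)
        = ((∑ j, d' j : ℕ) : ℤ) := by rw [Nat.cast_sum]
    have cast2 : ∑ i, ((if q ∣ a i then a i / q else a i : ℕ) : ℤ)
        = ((∑ i, a' i : ℕ) : ℤ) := by rw [Nat.cast_sum]
    have cast3 : ∑ j, ((d j : ℤ)) = ((∑ j, d j : ℕ) : ℤ) := by rw [Nat.cast_sum]
    have cast4 : ∑ i, ((a i : ℤ)) = ((∑ i, a i : ℕ) : ℤ) := by rw [Nat.cast_sum]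
    rw [cast1, cast2, cast3, cast4]
    have hT' : ((∑ i, (a i - a' i) : ℕ) : ℤ) < ((∑ j, (d j - d' j) : ℕ) : ℤ) :=
      by exact_mod_cast hT
    have hrd' : ((∑ j, d' j : ℕ) : ℤ) + ((∑ j, (d j - d' j) : ℕ) : ℤ)
        = ((∑ j, d j : ℕ) : ℤ) := by exact_mod_cast hrd
    have hra' : ((∑ i, a' i : ℕ) : ℤ) + ((∑ i, (a i - a' i) : ℕ) : ℤ)
        = ((∑ i, a i : ℕ) : ℤ) := by exact_mod_cast hra
    linarith
end
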